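/- Let γ(t) be a smooth curve in a Riemannian manifold X with γ(0) = x, and suppose β_X is a smooth vector field vanishing at x whose linearization dβ_X(x) is self-adjoint on T_x X, with grad⟨μ,β⟩ = β_X for a smooth map μ : X → 𝔭. If v := γ'(0) is an eigenvector of dβ_X(x) with eigenvalue λ, then the second derivative at t = 0 of t ↦ ⟨μ(γ(t)), β⟩ equals λ‖v‖². -/

import Mathlib

open scoped RealInnerProductSpace

/-- Proposition 2.5(1): let `γ` be a smooth curve with `γ(0) = x`, where the vector
field `β_X = Bv` (the gradient of `⟨μ,β⟩`) vanishes at `x` and its linearization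
`dβ_X(x)` is self-adjoint. If `v = γ'(0)` is an eigenvector of `dβ_X(x)` with
eigenvalue `λ`, then `(d²/dt²)|₀ ⟨μ(γ(t)), β⟩ = λ‖v‖²`. -/
theorem stmt_9
    {X P : Type*} [NormedAddCommGroup X] [InnerProductSpace ℝ X]
    [NormedAddCommGroup P] [InnerProductSpace ℝ P] [FiniteDimensional ℝ P]
    (μ : X → P) (hμ : ContDiff ℝ (⊤ : ℕ∞) μ) (β : P)
    (Bv : X → X) (hBv : ContDiff ℝ (⊤ : ℕ∞) Bv)
    (hgrad : ∀ y v : X, fderiv ℝ (fun z => ⟪μ z, β⟫) y v = ⟪Bv y, v⟫)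
    (x : X) (hx : Bv x = 0)
    (hself : ∀ u w : X, ⟪fderiv ℝ Bv x u, w⟫ = ⟪u, fderiv ℝ Bv x w⟫)
    (γ : ℝ → X) (hγ : ContDiff ℝ (⊤ : ℕ∞) γ) (hγ0 : γ 0 = x)
    (v : X) (hv : deriv γ 0 = v)
    (lam : ℝ) (heig : fderiv ℝ Bv x v = lam • v) :
    deriv (deriv fun t : ℝ => ⟪μ (γ t), β⟫) 0 = lam * ‖v‖ ^ 2 := by
  have hγd : Differentiable ℝ γ := hγ.differentiable (by simp)
  have hgsmooth : ContDiff ℝ (⊤ : ℕ∞) (fun z : X => ⟪μ z, β⟫) := hμ.inner ℝ contDiff_const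
  have key : deriv (fun t : ℝ => ⟪μ (γ t), β⟫) = fun t => ⟪Bv (γ t), deriv γ t⟫ := by
    funext t
    have h1 : HasDerivAt γ (deriv γ t) t := (hγd t).hasDerivAt
    have h2 : HasFDerivAt (fun z : X => ⟪μ z, β⟫) (fderiv ℝ (fun z : X => ⟪μ z, β⟫) (γ t)) (γ t) :=
      (hgsmooth.differentiable (by simp) (γ t)).hasFDerivAt
    have h3 := h2.comp_hasDerivAt t h1
    rw [show (fun t : ℝ => ⟪μ (γ t), β⟫) = (fun z : X => ⟪μ z, β⟫) ∘ γ from rfl, h3.deriv, hgrad]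
  have hBγ : HasDerivAt (fun t => Bv (γ t)) (lam • v) 0 := by
    have h1 : HasDerivAt γ v 0 := hv ▸ (hγd 0).hasDerivAt
    have h2 : HasFDerivAt Bv (fderiv ℝ Bv x) (γ 0) := by
      rw [hγ0]; exact (hBv.differentiable (by simp) x).hasFDerivAt
    have h3 := h2.comp_hasDerivAt 0 h1
    simpa [heig, Function.comp_def] using h3
  have hγ1 : ContDiff ℝ ((⊤ : ℕ∞) : WithTop ℕ∞) γ := hγ.of_le (by simp)
  have hdγ : HasDerivAt (deriv γ) (deriv (deriv γ) 0) 0 :=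
    ((contDiff_infty_iff_deriv.mp ((contDiff_infty_iff_deriv.mp hγ1).2)).1 0).hasDerivAt
  have hinner := hBγ.inner ℝ hdγ
  rw [key, hinner.deriv]
  simp [hγ0, hx, hv, real_inner_smul_left, real_inner_self_eq_norm_sq, sq]
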